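/- The number of F_{q^2}-rational points of the Hermitian curve attains the Hasse–Weil upper bound: q^3 + 1 = q^2 + 1 + 2g·q where g = q(q−1)/2 is the genus, so the Hermitian curve is a maximal curve over F_{q^2}. -/

import Mathlib

/-!
A point of the Hermitian curve `y z^q + y^q z = x^(q+1)` either lies on the line `z = 0`, where the
equation forces `x = 0`, leaving only `(0 : 1 : 0)`, or in the chart `z = 1`, where it is a solution
of `y + y^q = x^(q+1)`. There `x^(q+1)` is a norm of `F_{q²}/F_q`, so it is fixed by `t ↦ t^q`.
The trace `y ↦ y + y^q` is additive; its kernel and its image lie in the root sets of `t^q + t`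
and `t^q - t`, so each has at most `q` elements. Since their sizes multiply to `q²`, the trace maps
onto the fixed points of `t ↦ t^q` with all fibres of size exactly `q`.
This gives `q² · q` affine points, and `q³ + 1` points in all.
-/

open MvPolynomial

/-- The Hermitian curve over `F_{q²}`: the projectivization of the affine
equation `y + y^q = x^{q+1}` (coordinates `x = X 0`, `y = X 1`, `z = X 2`). -/
noncomputable def hermitianPoly (F : Type*) [Field F] (q : ℕ) : MvPolynomial (Fin 3) F :=
  X 1 * X 2 ^ q + X 1 ^ q * X 2 - X 0 ^ (q + 1)

theorem natCard_pow_eq_mul_le {F : Type*} [Field F] {q : ℕ} (hq : 1 < q) (a : F) :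
    Nat.card {y : F // y ^ q = a * y} ≤ q := by
  classical
  set P : Polynomial F := Polynomial.X ^ q - Polynomial.C a * Polynomial.X
  have hdeg : P.natDegree = q := by
    rw [Polynomial.natDegree_sub_eq_left_of_natDegree_lt] <;> rw [Polynomial.natDegree_X_pow]
    exact (Polynomial.natDegree_C_mul_le a _).trans_lt (Polynomial.natDegree_X_le.trans_lt hq)
  have hP : P ≠ 0 := fun h => by simp [h] at hdeg; omega
  have hsub : {y : F | y ^ q = a * y} ⊆ P.roots.toFinset := fun y hy => by
    simp_all [P, sub_eq_zero]
  calc Nat.card {y : F // y ^ q = a * y}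
      ≤ Nat.card (P.roots.toFinset : Set F) := Nat.card_mono (Finset.finite_toSet _) hsub
    _ ≤ q := by
      rw [Nat.card_coe_set_eq, Set.ncard_coe_finset, ← hdeg]
      exact (Multiset.toFinset_card_le _).trans (Polynomial.card_roots' P)

namespace MvPolynomial.IsHomogeneous

theorem eval_smul {σ R : Type*} [CommRing R] {φ : MvPolynomial σ R} {n : ℕ}
    (hφ : φ.IsHomogeneous n) (c : R) (v : σ → R) :
    eval (c • v) φ = c ^ n * eval v φ := by
  rw [eval_eq, eval_eq, Finset.mul_sum]
  refine Finset.sum_congr rfl fun d hd => ?_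
  have hdeg : ∑ i ∈ d.support, d i = n := by
    simpa [Finsupp.weight_apply, Finsupp.sum] using hφ (mem_support_iff.mp hd)
  simp only [Pi.smul_apply, smul_eq_mul, mul_pow, Finset.prod_mul_distrib,
    Finset.prod_pow_eq_pow_sum, hdeg]
  ring

theorem eval_mk_rep_eq_zero_iff {σ K : Type*} [Field K] {φ : MvPolynomial σ K} {n : ℕ}
    (hφ : φ.IsHomogeneous n) {v : σ → K} (hv : v ≠ 0) :
    eval (Projectivization.mk K v hv).rep φ = 0 ↔ eval v φ = 0 := by
  obtain ⟨a, ha⟩ := Projectivization.exists_smul_eq_mk_rep K v hv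
  rw [← ha, Units.smul_def, hφ.eval_smul, mul_eq_zero, or_iff_right (pow_ne_zero _ a.ne_zero)]

end MvPolynomial.IsHomogeneous

section HermitianCurve

variable (F : Type*) [Field F] (q : ℕ)

theorem isHomogeneous_hermitianPoly : (hermitianPoly F q).IsHomogeneous (q + 1) := by
  refine IsHomogeneous.sub (IsHomogeneous.add ?_ ?_) (isHomogeneous_X_pow _ _)
  · simpa [add_comm] using (isHomogeneous_X F 1).mul (isHomogeneous_X_pow 2 q)
  · simpa using (isHomogeneous_X_pow 1 q).mul (isHomogeneous_X F 2)

@[simp]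
theorem eval_hermitianPoly (v : Fin 3 → F) :
    eval v (hermitianPoly F q) = v 1 * v 2 ^ q + v 1 ^ q * v 2 - v 0 ^ (q + 1) := by
  simp [hermitianPoly]

/-- `none` is the point at infinity `(0 : 1 : 0)`, `some (x, y)` the point `(x : y : 1)`. -/
def hermitianChart : Option {xy : F × F // xy.2 + xy.2 ^ q = xy.1 ^ (q + 1)} →
    Projectivization F (Fin 3 → F)
  | none => .mk F ![0, 1, 0] (by simp)
  | some xy => .mk F ![xy.1.1, xy.1.2, 1] (by simp)

theorem hermitianChart_injective : Function.Injective (hermitianChart F q) := by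
  rintro (_ | ⟨⟨x, y⟩, _⟩) (_ | ⟨⟨x', y'⟩, _⟩) h <;>
    obtain ⟨a, ha⟩ := (Projectivization.mk_eq_mk_iff' ..).mp h <;>
    simp [funext_iff, Fin.forall_fin_succ] at ha
  · rfl
  · simp [ha.2.2] at ha
  · simp [← ha.1, ← ha.2.1, ha.2.2]

theorem range_hermitianChart (hq : q ≠ 0) :
    Set.range (hermitianChart F q) = {P | eval P.rep (hermitianPoly F q) = 0} := by
  have hH := isHomogeneous_hermitianPoly F q
  ext P
  constructor
  · rintro ⟨_ | ⟨⟨x, y⟩, hxy⟩, rfl⟩ <;>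
      simp only [hermitianChart, Set.mem_ofPred_eq, hH.eval_mk_rep_eq_zero_iff]
    · simp [hq]
    · simpa [sub_eq_zero] using hxy
  · intro hP
    obtain ⟨v, hv0, rfl⟩ : ∃ v hv, Projectivization.mk F v hv = P :=
      ⟨P.rep, P.rep_nonzero, P.mk_rep⟩
    rw [Set.mem_ofPred_eq, hH.eval_mk_rep_eq_zero_iff] at hP
    by_cases hz : v 2 = 0
    · have hx : v 0 = 0 := by simpa [hz, hq] using hP
      refine ⟨none, ((Projectivization.mk_eq_mk_iff' ..).mpr ⟨v 1, ?_⟩).symm⟩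
      ext i; fin_cases i <;> simp [hx, hz]
    · have hv : v 2 • ![v 0 / v 2, v 1 / v 2, 1] = v := by
        ext i; fin_cases i <;> simp [hz, mul_div_cancel₀]
      have hxy : eval ![v 0 / v 2, v 1 / v 2, 1] (hermitianPoly F q) = 0 := by
        rwa [← hv, hH.eval_smul, mul_eq_zero, or_iff_right (pow_ne_zero _ hz)] at hP
      refine ⟨some ⟨(v 0 / v 2, v 1 / v 2), ?_⟩,
        ((Projectivization.mk_eq_mk_iff' ..).mpr ⟨v 2, hv⟩).symm⟩
      simpa [sub_eq_zero] using hxy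

end HermitianCurve

section FiniteField

variable {F : Type*} [Field F] [Fintype F] {p k q : ℕ} [ExpChar F p]

theorem one_lt_of_card_eq_sq (hcard : Fintype.card F = q ^ 2) : 1 < q := by
  have := hcard ▸ Fintype.one_lt_card (α := F)
  by_contra! h
  interval_cases q <;> simp at this

theorem pow_pow_of_card_eq_sq (hcard : Fintype.card F = q ^ 2) (x : F) : (x ^ q) ^ q = x := by
  rw [← pow_mul, ← sq, ← hcard, FiniteField.pow_card]

theorem pow_succ_pow_of_card_eq_sq (hcard : Fintype.card F = q ^ 2) (x : F) :
    (x ^ (q + 1)) ^ q = x ^ (q + 1) := by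
  rw [pow_succ, mul_pow, pow_pow_of_card_eq_sq hcard, mul_comm]

theorem natCard_trace_fiber (hq : q = p ^ k) (hcard : Fintype.card F = q ^ 2) {c : F}
    (hc : c ^ q = c) : Nat.card {y : F // y + y ^ q = c} = q := by
  have hq1 := one_lt_of_card_eq_sq hcard
  let tr : F →+ F := AddMonoidHom.mk' (fun y => y + y ^ q) fun a b => by
    rw [hq, add_pow_expChar_pow]; ring
  have tr_apply (y : F) : tr y = y + y ^ q := rfl
  have hker : Nat.card tr.ker ≤ q := by
    refine le_of_eq_of_le (Nat.card_congr (Equiv.subtypeEquivRight fun y => ?_))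
      (natCard_pow_eq_mul_le hq1 (-1))
    rw [AddMonoidHom.mem_ker, tr_apply, add_eq_zero_iff_neg_eq', neg_one_mul, neg_eq_iff_eq_neg]
  have hrange_sub : (tr.range : Set F) ⊆ {x | x ^ q = 1 * x} := by
    rintro _ ⟨y, rfl⟩
    rw [Set.mem_ofPred_eq, tr_apply, one_mul, hq, add_pow_expChar_pow, ← hq,
      pow_pow_of_card_eq_sq hcard, add_comm]
  have hrange : Nat.card tr.range ≤ q :=
    (Nat.card_mono (Set.toFinite _) hrange_sub).trans (natCard_pow_eq_mul_le hq1 1)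
  have hmul : Nat.card tr.ker * Nat.card tr.range = q ^ 2 := by
    rw [← AddSubgroup.index_ker, AddSubgroup.card_mul_index, Nat.card_eq_fintype_card, hcard]
  have hrange_eq : Nat.card tr.range = q := by nlinarith
  have hker_eq : Nat.card tr.ker = q := by nlinarith
  obtain ⟨y₀, rfl⟩ : c ∈ tr.range := by
    have : (tr.range : Set F) = {x | x ^ q = 1 * x} :=
      Set.eq_of_subset_of_ncard_le hrange_sub (by
        rw [← Nat.card_coe_set_eq, ← Nat.card_coe_set_eq, SetLike.coe_sort_coe, hrange_eq]
        exact natCard_pow_eq_mul_le hq1 (1 : F))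
    simpa [← SetLike.mem_coe, this] using hc
  exact (Nat.card_congr (tr.fiberEquivKer y₀)).trans hker_eq

theorem natCard_hermitian_affine (hq : q = p ^ k) (hcard : Fintype.card F = q ^ 2) :
    Nat.card {xy : F × F // xy.2 + xy.2 ^ q = xy.1 ^ (q + 1)} = q ^ 3 := by
  rw [Nat.card_congr (Equiv.subtypeProdEquivSigmaSubtype fun x y => y + y ^ q = x ^ (q + 1)),
    Nat.card_sigma]
  simp_rw [natCard_trace_fiber hq hcard (pow_succ_pow_of_card_eq_sq hcard _)]
  rw [Finset.sum_const, Finset.card_univ, hcard, smul_eq_mul]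
  ring

theorem natCard_hermitian_projective (hq : q = p ^ k) (hcard : Fintype.card F = q ^ 2) :
    Nat.card {P : Projectivization F (Fin 3 → F) // eval P.rep (hermitianPoly F q) = 0} =
      q ^ 3 + 1 := by
  have hq0 : q ≠ 0 := (one_lt_of_card_eq_sq hcard).ne_bot
  calc Nat.card {P : Projectivization F (Fin 3 → F) // eval P.rep (hermitianPoly F q) = 0}
      = Nat.card (Option {xy : F × F // xy.2 + xy.2 ^ q = xy.1 ^ (q + 1)}) :=
        Nat.card_congr ((Equiv.ofInjective _ (hermitianChart_injective F q)).trans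
          (Equiv.setCongr (range_hermitianChart F q hq0))).symm
    _ = q ^ 3 + 1 := by rw [Finite.card_option, natCard_hermitian_affine hq hcard]

end FiniteField

theorem pow_three_add_one_eq_hasseWeil (q : ℕ) :
    q ^ 3 + 1 = q ^ 2 + 1 + 2 * (q * (q - 1) / 2) * q := by
  rw [Nat.two_mul_div_two_of_even (Nat.even_mul_pred_self q)]
  cases q <;> simp [pow_succ]; ring

theorem hermitian_is_maximal_general (F : Type*) [Field F] [Fintype F]
    (p k q : ℕ) [CharP F p] (hq : q = p ^ k)
    (hcard : Fintype.card F = q ^ 2) :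
    q ^ 3 + 1 = q ^ 2 + 1 + 2 * (q * (q - 1) / 2) * q ∧
    Nat.card {P : Projectivization F (Fin 3 → F) //
      eval P.rep (hermitianPoly F q) = 0} = q ^ 2 + 1 + 2 * (q * (q - 1) / 2) * q := by
  have : Fact p.Prime := ⟨CharP.char_is_prime F p⟩
  rw [← pow_three_add_one_eq_hasseWeil q]
  exact ⟨rfl, natCard_hermitian_projective hq hcard⟩

/-- The Hermitian curve attains the Hasse–Weil upper bound: with genus
`g = q(q-1)/2`, one has `q³ + 1 = q² + 1 + 2gq`, and this is exactly the number
of its `F_{q²}`-rational points; hence the Hermitian curve is maximal. -/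
theorem hermitian_is_maximal (F : Type*) [Field F] [Fintype F]
    (p k q : ℕ) (hp : p.Prime) [CharP F p] (hk : 0 < k) (hq : q = p ^ k)
    (hcard : Fintype.card F = q ^ 2) :
    q ^ 3 + 1 = q ^ 2 + 1 + 2 * (q * (q - 1) / 2) * q ∧
    Nat.card {P : Projectivization F (Fin 3 → F) //
      eval P.rep (hermitianPoly F q) = 0} = q ^ 2 + 1 + 2 * (q * (q - 1) / 2) * q :=
  hermitian_is_maximal_general F p k q hq hcard
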